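/- arXiv:2603.06514 — 2 statements merged into one kernel-verified Lean document; each statement's English description precedes it below -/
import Mathlib

section
/- Nash's inequality in one dimension: there is a universal constant C > 0 such that for every g ∈ H¹(ℝ) ∩ L¹(ℝ), ‖g‖_{L²}⁶ ≤ C ‖g‖_{L¹}⁴ ‖g'‖_{L²}². -/
open MeasureTheory Real Set

theorem stmt_14 :
    ∃ C : ℝ, 0 < C ∧ ∀ g g' : ℝ → ℝ,
      (∀ x, HasDerivAt g (g' x) x) →
      Integrable g →
      MemLp g 2 (volume : Measure ℝ) →
      MemLp g' 2 (volume : Measure ℝ) →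
      (∫ x, g x ^ 2) ^ 3 ≤ C * (∫ x, |g x|) ^ 4 * (∫ x, g' x ^ 2) := by
  refine ⟨4, by norm_num, ?_⟩
  intro g g' hderiv hint hg2 hg'2
  set A := ∫ x, g' x ^ 2 with hAdef
  set B := ∫ x, g x ^ 2 with hBdef
  set L := ∫ x, |g x| with hLdef
  have hA0 : 0 ≤ A := integral_nonneg fun x => sq_nonneg _
  have hB0 : 0 ≤ B := integral_nonneg fun x => sq_nonneg _
  have hL0 : 0 ≤ L := integral_nonneg fun x => abs_nonneg _
  have hBint : Integrable (fun x => g x ^ 2) := hg2.integrable_sq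
  have hAint : Integrable (fun x => g' x ^ 2) := hg'2.integrable_sq
  -- integrability of g * g'
  have hmeas : AEStronglyMeasurable (fun x => g x * g' x) volume := hg2.1.mul hg'2.1
  have hgg' : Integrable (fun x => g x * g' x) := by
    refine (hBint.add hAint).mono' hmeas ?_
    filter_upwards with x
    simp only [norm_mul, Real.norm_eq_abs, Pi.add_apply]
    nlinarith [sq_nonneg (|g x| - |g' x|), sq_abs (g x), sq_abs (g' x)]
  -- Cauchy–Schwarz : ∫ |g| |g'| ≤ √B √A
  have hCS : ∫ x, |g x| * |g' x| ≤ Real.sqrt B * Real.sqrt A := by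
    have h2 : (2 : ℝ).HolderConjugate 2 := by
      constructor <;> norm_num
    have hf : MemLp (fun x => |g x|) (ENNReal.ofReal 2) volume := by
      simpa [Real.norm_eq_abs, ENNReal.ofReal_ofNat] using hg2.norm
    have hg : MemLp (fun x => |g' x|) (ENNReal.ofReal 2) volume := by
      simpa [Real.norm_eq_abs, ENNReal.ofReal_ofNat] using hg'2.norm
    have := integral_mul_le_Lp_mul_Lq_of_nonneg h2
      (Filter.Eventually.of_forall fun x => abs_nonneg (g x))
      (Filter.Eventually.of_forall fun x => abs_nonneg (g' x)) hf hg
    have e1 : ∫ x, |g x| ^ (2:ℝ) = B := by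
      rw [hBdef]
      congr 1 with x
      rw [show ((2:ℝ)) = ((2:ℕ) : ℝ) by norm_num, Real.rpow_natCast, sq_abs]
    have e2 : ∫ x, |g' x| ^ (2:ℝ) = A := by
      rw [hAdef]
      congr 1 with x
      rw [show ((2:ℝ)) = ((2:ℕ) : ℝ) by norm_num, Real.rpow_natCast, sq_abs]
    rw [e1, e2] at this
    calc ∫ x, |g x| * |g' x| ≤ B ^ (1/(2:ℝ)) * A ^ (1/(2:ℝ)) := this
    _ = Real.sqrt B * Real.sqrt A := by
        rw [Real.sqrt_eq_rpow, Real.sqrt_eq_rpow]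
  have habs : ∫ x, |g x * g' x| ≤ Real.sqrt B * Real.sqrt A := by
    refine le_trans (le_of_eq ?_) hCS
    congr 1 with x
    exact abs_mul _ _
  have h2gg' : Integrable (fun t => 2 * g t * g' t) := by
    simpa [mul_assoc] using hgg'.const_mul 2
  -- pointwise bound : g x ^ 2 ≤ 2 √B √A
  have hpt : ∀ x, g x ^ 2 ≤ 2 * (Real.sqrt B * Real.sqrt A) := by
    intro x
    refine le_of_forall_pos_le_add ?_
    intro ε hε
    -- find y ≤ x with g y ^ 2 < ε
    have hfin : volume {t : ℝ | ε ≤ g t ^ 2} < ⊤ := hBint.measure_ge_lt_top hε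
    have : ¬ (Iic x ⊆ {t : ℝ | ε ≤ g t ^ 2}) := by
      intro hsub
      have := measure_mono (μ := volume) hsub
      rw [Real.volume_Iic] at this
      exact absurd (lt_of_le_of_lt this hfin) (by simp)
    obtain ⟨y, hy, hyε⟩ := not_subset.mp this
    simp only [mem_setOf_eq, not_le] at hyε
    have hyx : y ≤ x := hy
    -- FTC
    have hderivsq : ∀ t ∈ Set.uIcc y x, HasDerivAt (fun s => g s ^ 2)
        (2 * g t * g' t) t := by
      intro t _
      have := (hderiv t).fun_pow 2
      simpa [mul_comm, mul_assoc, mul_left_comm] using this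
    have hii : IntervalIntegrable (fun t => 2 * g t * g' t) volume y x :=
      h2gg'.intervalIntegrable
    have hftc := intervalIntegral.integral_eq_sub_of_hasDerivAt hderivsq hii
    -- bound the interval integral
    have hbnd : ∫ t in y..x, 2 * g t * g' t ≤ 2 * (Real.sqrt B * Real.sqrt A) := by
      have h1 : ∫ t in y..x, 2 * g t * g' t ≤ |∫ t in y..x, 2 * g t * g' t| :=
        le_abs_self _
      have h2 : |∫ t in y..x, 2 * g t * g' t| ≤ ∫ t in Set.Ioc y x, |2 * g t * g' t| := by
        rw [show (∫ t in Set.Ioc y x, |2 * g t * g' t|)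
            = ∫ t in y..x, |2 * g t * g' t| from
          (intervalIntegral.integral_of_le hyx).symm]
        exact intervalIntegral.abs_integral_le_integral_abs hyx
      have h3 : ∫ t in Set.Ioc y x, |2 * g t * g' t| ≤ ∫ t, |2 * g t * g' t| := by
        refine setIntegral_le_integral h2gg'.abs ?_
        filter_upwards with t using abs_nonneg _
      have h4 : ∫ t, |2 * g t * g' t| = 2 * ∫ t, |g t * g' t| := by
        rw [← integral_const_mul]
        congr 1 with t
        simp [abs_mul, mul_assoc]
      calc ∫ t in y..x, 2 * g t * g' t ≤ ∫ t, |2 * g t * g' t| :=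
            le_trans h1 (le_trans h2 h3)
        _ = 2 * ∫ t, |g t * g' t| := h4
        _ ≤ 2 * (Real.sqrt B * Real.sqrt A) := by linarith [habs]
    have : g x ^ 2 = g y ^ 2 + ∫ t in y..x, 2 * g t * g' t := by
      rw [hftc]; ring
    rw [this]
    linarith [hyε.le, hbnd]
  -- ∫ g² ≤ √(2√B√A) · ∫ |g|
  set M := 2 * (Real.sqrt B * Real.sqrt A) with hMdef
  have hM0 : 0 ≤ M := by positivity
  have hBM : B ≤ Real.sqrt M * L := by
    have hptabs : ∀ x, |g x| ≤ Real.sqrt M := by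
      intro x
      have := Real.sqrt_le_sqrt (hpt x)
      rwa [Real.sqrt_sq_eq_abs] at this
    have : B ≤ ∫ x, Real.sqrt M * |g x| := by
      refine integral_mono hBint (hint.abs.const_mul _) ?_
      intro x
      show g x ^ 2 ≤ Real.sqrt M * |g x|
      have : g x ^ 2 = |g x| * |g x| := by rw [← sq_abs]; ring
      rw [this]
      exact mul_le_mul_of_nonneg_right (hptabs x) (abs_nonneg _)
    rwa [integral_const_mul] at this
  -- conclude
  have hM2 : M ^ 2 = 4 * B * A := by
    rw [hMdef]
    rw [mul_pow, mul_pow, Real.sq_sqrt hB0, Real.sq_sqrt hA0]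
    ring
  have hB2 : B ^ 2 ≤ M * L ^ 2 := by
    have := mul_self_le_mul_self hB0 hBM
    calc B ^ 2 = B * B := sq B
      _ ≤ (Real.sqrt M * L) * (Real.sqrt M * L) := this
      _ = (Real.sqrt M * Real.sqrt M) * (L * L) := by ring
      _ = M * L ^ 2 := by rw [Real.mul_self_sqrt hM0]; ring
  have hB4 : B ^ 4 ≤ 4 * B * A * L ^ 4 := by
    have := mul_self_le_mul_self (by positivity) hB2
    calc B ^ 4 = B ^ 2 * B ^ 2 := by ring
      _ ≤ (M * L ^ 2) * (M * L ^ 2) := this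
      _ = M ^ 2 * L ^ 4 := by ring
      _ = 4 * B * A * L ^ 4 := by rw [hM2]
  rcases eq_or_lt_of_le hB0 with hB | hB
  · rw [← hB]
    norm_num
    exact mul_nonneg (by positivity) hA0
  · have : B ^ 3 * B ≤ (4 * L ^ 4 * A) * B := by nlinarith
    exact le_of_mul_le_mul_right this hB
end

section
/- Let φ : [0,∞) → [0,∞) be continuous with φ ∈ L¹(0,∞). Suppose that for any t₁ < t₂ with φ(t₂) ≥ φ(t₁) we have φ(t₂) - φ(t₁) ≤ ∫_{t₁}^{t₂} ψ(t) dt for a fixed nonnegative ψ ∈ L¹(0,∞). Then lim_{t→∞} φ(t) = 0. -/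
open MeasureTheory Real Set Filter

theorem stmt_16 (φ ψ : ℝ → ℝ)
    (hφcont : Continuous φ) (hφ0 : ∀ t, 0 ≤ t → 0 ≤ φ t)
    (hφint : IntegrableOn φ (Set.Ioi 0))
    (hψ0 : ∀ t, 0 ≤ t → 0 ≤ ψ t) (hψint : IntegrableOn ψ (Set.Ioi 0))
    (hincr : ∀ t₁ t₂, 0 ≤ t₁ → t₁ < t₂ → φ t₁ ≤ φ t₂ →
      φ t₂ - φ t₁ ≤ ∫ t in t₁..t₂, ψ t) :
    Filter.Tendsto φ Filter.atTop (nhds 0) := by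
  by_contra hcon
  rw [Metric.tendsto_atTop] at hcon
  push_neg at hcon
  obtain ⟨ε, hε, hfreq⟩ := hcon
  have hF : Tendsto (fun b => ∫ t in (0:ℝ)..b, ψ t) atTop
      (nhds (∫ t in Set.Ioi (0:ℝ), ψ t)) :=
    intervalIntegral_tendsto_integral_Ioi 0 hψint tendsto_id
  rw [Metric.tendsto_atTop] at hF
  obtain ⟨T₀, hT₀⟩ := hF (ε/4) (by linarith)
  set T := max T₀ 0 with hTdef
  have hT0 : (0:ℝ) ≤ T := le_max_right T₀ 0
  have hsmall : ∃ t₁, T < t₁ ∧ φ t₁ < ε/2 := by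
    by_contra h
    push_neg at h
    have hsub : Set.Ioi T ⊆ Set.Ioi (0:ℝ) := fun x hx => lt_of_le_of_lt hT0 hx
    have hφT : IntegrableOn φ (Set.Ioi T) := hφint.mono_set hsub
    have hconst : IntegrableOn (fun _ => ε/2) (Set.Ioi T) := by
      apply Integrable.mono' hφT aestronglyMeasurable_const
      filter_upwards [ae_restrict_mem measurableSet_Ioi] with x hx
      rw [Real.norm_eq_abs, abs_of_nonneg (by linarith)]
      exact h x hx
    rw [integrableOn_const_iff] at hconst
    rcases hconst with h1 | h2
    · rw [enorm_eq_zero] at h1; linarith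
    · rw [Real.volume_Ioi] at h2
      exact (lt_irrefl _ h2).elim
  obtain ⟨t₁, ht₁T, ht₁⟩ := hsmall
  obtain ⟨t₂, ht₂ge, ht₂⟩ := hfreq (t₁ + 1)
  have ht₁pos : 0 < t₁ := lt_of_le_of_lt hT0 ht₁T
  have ht₂pos : (0:ℝ) < t₂ := by linarith
  rw [Real.dist_eq, sub_zero, abs_of_nonneg (hφ0 t₂ ht₂pos.le)] at ht₂
  have hlt : t₁ < t₂ := by linarith
  have hle : φ t₁ ≤ φ t₂ := by linarith
  have hii : ∀ a b : ℝ, 0 ≤ a → a ≤ b → IntervalIntegrable ψ volume a b := by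
    intro a b ha hab
    rw [intervalIntegrable_iff_integrableOn_Ioc_of_le hab]
    exact hψint.mono_set (fun x hx => lt_of_le_of_lt ha hx.1)
  have key := hincr t₁ t₂ ht₁pos.le hlt hle
  have hadd : (∫ t in (0:ℝ)..t₁, ψ t) + (∫ t in t₁..t₂, ψ t)
      = ∫ t in (0:ℝ)..t₂, ψ t :=
    intervalIntegral.integral_add_adjacent_intervals
      (hii 0 t₁ le_rfl ht₁pos.le) (hii t₁ t₂ ht₁pos.le hlt.le)
  have hT₀t₁ : T₀ ≤ t₁ := le_trans (le_max_left T₀ 0) ht₁T.le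
  have h1 := hT₀ t₁ hT₀t₁
  have h2 := hT₀ t₂ (by linarith : T₀ ≤ t₂)
  rw [Real.dist_eq] at h1 h2
  have ha1 := abs_lt.mp h1
  have ha2 := abs_lt.mp h2
  linarith [ha1.1, ha1.2, ha2.1, ha2.2]
end
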